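/- Let d and k be integers with 1 ≤ k ≤ d−1. There is a constant c = c(d,k) > 0 such that the following holds. Let Λ be a d-dimensional lattice in ℝ^d and let K ∈ K^d, and set λ_i := λ_i(Λ,K) for i = 1,…,d. If λ_d ≤ 1, then every family of k-dimensional affine subspaces of ℝ^d that covers Λ ∩ K has at least c·(λ_{k+1}·λ_{k+2}·⋯·λ_d)^{−1} members. -/

import Mathlib

open scoped BigOperators Pointwise
open Metric

noncomputable section

abbrev Euc (d : ℕ) := EuclideanSpace ℝ (Fin d)

def IsLattice {d : ℕ} (Λ : Set (Euc d)) : Prop :=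
  ∃ b : Fin d → Euc d, LinearIndependent ℝ b ∧
    Λ = {x : Euc d | ∃ c : Fin d → ℤ, x = ∑ i, (c i : ℝ) • b i}

def IsSymmConvexBody {d : ℕ} (K : Set (Euc d)) : Prop :=
  IsCompact K ∧ Convex ℝ K ∧ (interior K).Nonempty ∧ K = -K

def succMin {d : ℕ} (Λ K : Set (Euc d)) (i : ℕ) : ℝ :=
  sInf {r : ℝ | 0 < r ∧ ∃ v : Fin i → Euc d,
    LinearIndependent ℝ v ∧ ∀ j, v j ∈ Λ ∧ v j ∈ r • K}

def unitBall (d : ℕ) : Set (Euc d) := Metric.closedBall 0 1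

def intPoints (d : ℕ) : Set (Euc d) := {x | ∀ i, ∃ m : ℤ, x i = (m : ℝ)}

def dualLattice {d : ℕ} (Λ : Set (Euc d)) : Set (Euc d) :=
  {y | ∀ x ∈ Λ, ∃ m : ℤ, (inner ℝ x y : ℝ) = (m : ℝ)}

def IsPrimitive {d : ℕ} (L : Set (Euc d)) (z : Euc d) : Prop :=
  z ∈ L ∧ z ≠ 0 ∧ ∀ t : ℝ, t • z ∈ L → ∃ m : ℤ, t = (m : ℝ)

def IsHyperplane {d : ℕ} (A : AffineSubspace ℝ (Euc d)) : Prop :=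
  (A : Set (Euc d)).Nonempty ∧ Module.finrank ℝ A.direction = d - 1

def inc {d : ℕ} (P : Finset (Euc d)) (H : Finset (AffineSubspace ℝ (Euc d))) : ℕ :=
  Set.ncard {ph : Euc d × AffineSubspace ℝ (Euc d) | ph.1 ∈ P ∧ ph.2 ∈ H ∧ ph.1 ∈ ph.2}

def HasKrr {d : ℕ} (P : Finset (Euc d)) (H : Finset (AffineSubspace ℝ (Euc d))) (r₁ r₂ : ℕ) : Prop :=
  ∃ (P' : Finset (Euc d)) (H' : Finset (AffineSubspace ℝ (Euc d))),
    P' ⊆ P ∧ H' ⊆ H ∧ P'.card = r₁ ∧ H'.card = r₂ ∧ ∀ p ∈ P', ∀ h ∈ H', p ∈ h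

/-!
Since `λ_{k+1} > 0`, there are linearly independent lattice vectors `w₁, …, w_d` with
`wᵢ ∈ 2 λ_{max(i, k+1)} K`. By convexity, the lattice points `∑ cᵢ wᵢ` with integers
`0 ≤ cᵢ ≤ 1 / (2d λ_{max(i, k+1)})` lie in `Λ ∩ K`; there are at least
`(2d)^{-d} λ_{k+1}^{-k} (λ_{k+1} ⋯ λ_d)^{-1}` of them. Because the `wᵢ` are independent, a point of
this box lying on a `k`-flat is determined by `k` of its coefficients, so each flat contains at most
`(1 + 1 / (2λ_{k+1}))^k` of them, and the powers of `λ_{k+1}` cancel.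
-/

open Finset

namespace IsSymmConvexBody

variable {d : ℕ} {K : Set (Euc d)}

theorem zero_mem_interior (hK : IsSymmConvexBody K) : (0 : Euc d) ∈ interior K := by
  obtain ⟨-, hconv, ⟨x, hx⟩, hsymm⟩ := hK
  have hx' : -x ∈ interior K := by
    rw [hsymm, ← Set.neg_preimage]
    exact (Homeomorph.neg (Euc d)).preimage_interior K ▸ by simpa using hx
  simpa using hconv.interior hx hx' (by norm_num : (0 : ℝ) ≤ 1 / 2) (by norm_num : (0 : ℝ) ≤ 1 / 2)
    (by norm_num)

theorem zero_mem (hK : IsSymmConvexBody K) : (0 : Euc d) ∈ K :=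
  interior_subset hK.zero_mem_interior

theorem smul_subset_smul (hK : IsSymmConvexBody K) {r s : ℝ} (hr : 0 < r) (hrs : r ≤ s) :
    r • K ⊆ s • K := by
  rintro _ ⟨y, hy, rfl⟩
  have hs : 0 < s := hr.trans_le hrs
  refine ⟨(r / s) • y, hK.2.1.smul_mem_of_zero_mem hK.zero_mem hy
    ⟨by positivity, (div_le_one hs).2 hrs⟩, ?_⟩
  simp only [smul_smul, mul_div_cancel₀ _ hs.ne']

theorem sum_smul_mem {ι : Type*} [Fintype ι] (hK : IsSymmConvexBody K) {u : ι → Euc d}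
    (hu : ∀ i, u i ∈ K) {t : ι → ℝ} (ht : ∀ i, 0 ≤ t i) (hts : ∑ i, t i ≤ 1) :
    ∑ i, t i • u i ∈ K := by
  -- the missing weight `1 - ∑ t` goes to the point `0 ∈ K`
  have := hK.2.1.sum_mem (t := univ) (w := fun o : Option ι => o.elim (1 - ∑ i, t i) t)
    (z := fun o => o.elim 0 u)
    (fun o _ => by cases o <;> simp [ht, hts])
    (by simp [Fintype.sum_option])
    (fun o _ => by cases o <;> simp [hu, hK.zero_mem])
  simpa [Fintype.sum_option] using this

theorem sum_smul_mem_of_mem_smul {ι : Type*} [Fintype ι] (hK : IsSymmConvexBody K)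
    {w : ι → Euc d} {ρ : ι → ℝ} (hρ : ∀ i, 0 < ρ i) (hw : ∀ i, w i ∈ ρ i • K)
    {c : ι → ℝ} (hc : ∀ i, 0 ≤ c i) (hcρ : ∑ i, c i * ρ i ≤ 1) :
    ∑ i, c i • w i ∈ K := by
  choose u hu hwu using hw
  simp_rw [← hwu, smul_smul]
  exact hK.sum_smul_mem hu (fun i => mul_nonneg (hc i) (hρ i).le) hcρ

end IsSymmConvexBody

theorem IsLattice.sum_natCast_smul_mem {d : ℕ} {Λ : Set (Euc d)} (hL : IsLattice Λ)
    {ι : Type*} [Fintype ι] {w : ι → Euc d} (hw : ∀ i, w i ∈ Λ) (c : ι → ℕ) :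
    ∑ i, (c i : ℝ) • w i ∈ Λ := by
  obtain ⟨b, -, rfl⟩ := hL
  have hspan : {x : Euc d | ∃ c : Fin d → ℤ, x = ∑ i, (c i : ℝ) • b i} =
      Submodule.span ℤ (Set.range b) := by
    ext x
    simp [Submodule.mem_span_range_iff_exists_fun, Int.cast_smul_eq_zsmul, eq_comm]
  rw [hspan] at hw ⊢
  exact sum_mem fun i _ => by simpa [Nat.cast_smul_eq_nsmul] using nsmul_mem (hw i) (c i)

section SuccessiveMinima

variable {d : ℕ} {Λ K : Set (Euc d)}

def succMinSet (Λ K : Set (Euc d)) (i : ℕ) : Set ℝ :=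
  {r : ℝ | 0 < r ∧ ∃ v : Fin i → Euc d, LinearIndependent ℝ v ∧ ∀ j, v j ∈ Λ ∧ v j ∈ r • K}

theorem succMin_nonneg (Λ K : Set (Euc d)) (i : ℕ) : 0 ≤ succMin Λ K i :=
  Real.sInf_nonneg fun _ hr => hr.1.le

theorem succMinSet_nonempty (hL : IsLattice Λ) (hK : IsSymmConvexBody K) {m : ℕ} (hm : m ≤ d) :
    (succMinSet Λ K m).Nonempty := by
  obtain ⟨b, hb, hΛ⟩ := hL
  have hbΛ : ∀ j, b j ∈ Λ := fun j =>
    hΛ ▸ ⟨Pi.single j 1, by simp [Pi.single_apply]⟩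
  -- every `b j` lies in `R • K` once `R⁻¹ • b j` falls into a ball around `0` inside `K`
  obtain ⟨δ, hδ, hball⟩ := Metric.mem_nhds_iff.1 (mem_interior_iff_mem_nhds.1 hK.zero_mem_interior)
  set R : ℝ := (∑ i, ‖b i‖) / δ + 1
  have hR : 0 < R := by positivity
  refine ⟨R, hR, fun i => b (Fin.castLE hm i), hb.comp _ (Fin.castLE_injective hm),
    fun j => ⟨hbΛ _, R⁻¹ • b (Fin.castLE hm j), hball ?_, smul_inv_smul₀ hR.ne' _⟩⟩
  have hbj : ‖b (Fin.castLE hm j)‖ < R * δ := calc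
    ‖b (Fin.castLE hm j)‖ ≤ ∑ i, ‖b i‖ :=
      Finset.single_le_sum (f := fun i => ‖b i‖) (fun i _ => norm_nonneg _) (Finset.mem_univ _)
    _ < R * δ := by simp only [R, add_mul, div_mul_cancel₀ _ hδ.ne']; linarith
  rw [Metric.mem_ball, dist_zero_right, norm_smul, norm_inv, Real.norm_of_nonneg hR.le,
    inv_mul_lt_iff₀ hR]
  exact hbj

theorem succMin_mono (hL : IsLattice Λ) (hK : IsSymmConvexBody K) {i j : ℕ} (hij : i ≤ j)
    (hj : j ≤ d) : succMin Λ K i ≤ succMin Λ K j := by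
  refine csInf_le_csInf ⟨0, fun _ hr => hr.1.le⟩ (succMinSet_nonempty hL hK hj) ?_
  rintro r ⟨hr, v, hv, hvmem⟩
  exact ⟨hr, fun t => v (Fin.castLE hij t), hv.comp _ (Fin.castLE_injective hij),
    fun t => hvmem _⟩

theorem exists_linearIndependent_mem_smul (hL : IsLattice Λ) (hK : IsSymmConvexBody K)
    {ρ : ℕ → ℝ} : ∀ m ≤ d, (∀ i < m, succMin Λ K (i + 1) < ρ i) →
      ∃ w : Fin m → Euc d, LinearIndependent ℝ w ∧ ∀ i, w i ∈ Λ ∧ w i ∈ ρ i • K := by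
  intro m
  induction m with
  | zero => exact fun _ _ => ⟨Fin.elim0, linearIndependent_empty_type, fun i => i.elim0⟩
  | succ m ih =>
    intro hm hρ
    obtain ⟨w, hw, hwmem⟩ := ih (by omega) fun i hi => hρ i (by omega)
    obtain ⟨r, ⟨hr, v, hv, hvmem⟩, hrρ⟩ :=
      exists_lt_of_csInf_lt (succMinSet_nonempty hL hK hm) (hρ m (by omega))
    -- `m + 1` independent vectors cannot all lie in the `m`-dimensional span of `w`
    obtain ⟨j, hj⟩ : ∃ j, v j ∉ Submodule.span ℝ (Set.range w) := by
      by_contra! h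
      have := Submodule.finrank_mono (Submodule.span_le.2 (Set.range_subset_iff.2 h))
      rw [finrank_span_eq_card hv, finrank_span_eq_card hw] at this
      simp at this
    refine ⟨Fin.snoc w (v j), linearIndependent_finSnoc.2 ⟨hw, hj⟩, Fin.lastCases ?_ ?_⟩
    · simpa using ⟨(hvmem j).1, hK.smul_subset_smul hr hrρ.le (hvmem j).2⟩
    · simpa using hwmem

end SuccessiveMinima

section Counting

theorem Submodule.exists_finset_card_le_finrank_of_coords_eq_zero {𝕜 ι : Type*} [Field 𝕜]
    [Finite ι] (W : Submodule 𝕜 (ι → 𝕜)) :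
    ∃ J : Finset ι, #J ≤ Module.finrank 𝕜 W ∧ ∀ x ∈ W, (∀ j ∈ J, x j = 0) → x = 0 := by
  classical
  induction hn : Module.finrank 𝕜 W using Nat.strong_induction_on generalizing W with
  | _ n ih =>
  by_cases hbot : W = ⊥
  · exact ⟨∅, Nat.zero_le _, fun x hx _ => by rwa [hbot, Submodule.mem_bot] at hx⟩
  obtain ⟨x, hxW, hx⟩ := Submodule.exists_mem_ne_zero_of_ne_bot hbot
  obtain ⟨j, hj⟩ := Function.ne_iff.1 hx
  set W' := W ⊓ LinearMap.ker (LinearMap.proj (R := 𝕜) (φ := fun _ : ι => 𝕜) j)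
  have hlt : W' < W := inf_le_left.lt_of_ne fun h => hj (SetLike.le_def.1 h.ge hxW).2
  obtain ⟨J, hJ, hJW⟩ := ih _ (hn ▸ Submodule.finrank_lt_finrank_of_lt hlt) W' rfl
  refine ⟨insert j J, (card_insert_le _ _).trans ?_, fun y hy hyJ => ?_⟩
  · have := Submodule.finrank_lt_finrank_of_lt hlt
    omega
  exact hJW y ⟨hy, hyJ j (mem_insert_self _ _)⟩ fun t ht => hyJ t (mem_insert_of_mem ht)

variable {ι V : Type*} [Fintype ι] [DecidableEq ι] [AddCommGroup V] [Module ℝ V]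
  [FiniteDimensional ℝ V]

open Classical in
theorem card_filter_sum_smul_mem_le {w : ι → V} (hw : LinearIndependent ℝ w)
    {A : AffineSubspace ℝ V} {k : ℕ} (hA : Module.finrank ℝ A.direction ≤ k)
    {M : ι → ℕ} {M₀ : ℕ} (hM : ∀ i, M i ≤ M₀) :
    #{c ∈ Fintype.piFinset fun i => range (M i + 1) | ∑ i, (c i : ℝ) • w i ∈ A} ≤
      (M₀ + 1) ^ k := by
  set f := Fintype.linearCombination ℝ w
  set W := A.direction.comap f
  have hW : Module.finrank ℝ W ≤ k :=
    (LinearMap.finrank_le_finrank_of_injective (f := (f.domRestrict W).codRestrict A.direction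
      fun z => z.2) fun z₁ z₂ h => Subtype.ext (hw.fintypeLinearCombination_injective
        (congrArg Subtype.val h))).trans hA
  obtain ⟨J, hJ, hJW⟩ := W.exists_finset_card_le_finrank_of_coords_eq_zero
  -- a point of the flat is determined by its coordinates in `J`
  calc _ ≤ #(Fintype.piFinset fun _ : J => range (M₀ + 1)) := by
        refine card_le_card_of_injOn (fun c (j : J) => c j) (fun c hc => ?_) ?_
        · simp only [coe_filter, Fintype.mem_piFinset, mem_range, Set.mem_ofPred_eq] at hc
          simpa [Nat.lt_succ_iff] using fun j _ => (Nat.lt_succ_iff.1 (hc.1 j)).trans (hM j)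
        · intro c hc c' hc' hcc'
          simp only [coe_filter, Set.mem_ofPred_eq] at hc hc'
          have hz := hJW (fun i => (c i : ℝ) - c' i)
            (by simpa [W, f, Fintype.linearCombination_apply, sub_smul, sum_sub_distrib]
              using A.vsub_mem_direction hc.2 hc'.2)
            (fun j hj => by simp [congrFun hcc' ⟨j, hj⟩])
          funext i
          exact_mod_cast sub_eq_zero.1 (congrFun hz i)
    _ ≤ (M₀ + 1) ^ k := by
        simpa using Nat.pow_le_pow_right (Nat.succ_pos M₀) (hJ.trans hW)

theorem prod_le_card_mul_of_covers {w : ι → V} (hw : LinearIndependent ℝ w) {k : ℕ}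
    {S : Finset (AffineSubspace ℝ V)} (hS : ∀ A ∈ S, Module.finrank ℝ A.direction ≤ k)
    {M : ι → ℕ} {M₀ : ℕ} (hM : ∀ i, M i ≤ M₀)
    (hcover : ∀ c ∈ Fintype.piFinset fun i => range (M i + 1),
      ∃ A ∈ S, ∑ i, (c i : ℝ) • w i ∈ A) :
    ∏ i, (M i + 1) ≤ #S * (M₀ + 1) ^ k := by
  classical
  set box := Fintype.piFinset fun i => range (M i + 1)
  calc ∏ i, (M i + 1) = #box := by simp [box]
    _ ≤ #(S.biUnion fun A => {c ∈ box | ∑ i, (c i : ℝ) • w i ∈ A}) := card_le_card fun c hc => by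
        obtain ⟨A, hA, hcA⟩ := hcover c hc
        exact mem_biUnion.2 ⟨A, hA, mem_filter.2 ⟨hc, hcA⟩⟩
    _ ≤ ∑ A ∈ S, #{c ∈ box | ∑ i, (c i : ℝ) • w i ∈ A} := card_biUnion_le
    _ ≤ ∑ _A ∈ S, (M₀ + 1) ^ k := sum_le_sum fun A hA => card_filter_sum_smul_mem_le hw (hS A hA) hM
    _ = #S * (M₀ + 1) ^ k := by rw [sum_const, smul_eq_mul]

end Counting

theorem prod_fin_apply_max_succ {M : Type*} [CommMonoid M] (f : ℕ → M) {k d : ℕ} (hkd : k ≤ d) :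
    ∏ i : Fin d, f (max (i + 1) (k + 1)) = f (k + 1) ^ k * ∏ i ∈ Icc (k + 1) d, f i := by
  rw [Fin.prod_univ_eq_prod_range (fun i => f (max (i + 1) (k + 1))),
    ← prod_range_mul_prod_Ico _ hkd, ← Ico_add_one_right_eq_Icc, ← prod_Ico_add' f k d 1]
  congr 1
  · rw [prod_congr rfl fun i hi => by rw [max_eq_right (by simp at hi; omega)], prod_const,
      card_range]
  · exact prod_congr rfl fun i hi => by rw [max_eq_left (by simpa using (mem_Ico.1 hi).1)]

theorem sum_mul_le_one_of_le_floor_inv {ι : Type*} [Fintype ι] {ρ : ι → ℝ} (hρ : ∀ i, 0 < ρ i)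
    {c : ι → ℕ} (hc : ∀ i, c i ≤ ⌊(Fintype.card ι * ρ i)⁻¹⌋₊) : ∑ i, (c i : ℝ) * ρ i ≤ 1 := by
  rcases isEmpty_or_nonempty ι with hι | hι
  · simp
  have hcard : (0 : ℝ) < Fintype.card ι := by exact_mod_cast Fintype.card_pos
  calc ∑ i, (c i : ℝ) * ρ i ≤ ∑ i, (Fintype.card ι * ρ i)⁻¹ * ρ i := by
        refine sum_le_sum fun i _ => mul_le_mul_of_nonneg_right ?_ (hρ i).le
        exact (Nat.cast_le.2 (hc i)).trans (Nat.floor_le (inv_pos.2 (mul_pos hcard (hρ i))).le)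
    _ = 1 := by
        simp_rw [mul_inv, mul_assoc, inv_mul_cancel₀ (hρ _).ne', mul_one, sum_const, card_univ,
          nsmul_eq_mul, mul_inv_cancel₀ hcard.ne']

theorem inv_prod_mul_pow_le_card_of_covers {d k : ℕ} {Λ K : Set (Euc d)} (hL : IsLattice Λ)
    (hK : IsSymmConvexBody K) {S : Finset (AffineSubspace ℝ (Euc d))}
    (hS : ∀ A ∈ S, Module.finrank ℝ A.direction ≤ k) (hcover : ∀ x ∈ Λ ∩ K, ∃ A ∈ S, x ∈ A)
    {w : Fin d → Euc d} (hw : LinearIndependent ℝ w) {ρ : Fin d → ℝ} {ρ₀ : ℝ} (hρ₀ : 0 < ρ₀)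
    (hρ₀_le : ρ₀ ≤ 2) (hρ : ∀ i, ρ₀ ≤ ρ i) (hwΛK : ∀ i, w i ∈ Λ ∧ w i ∈ ρ i • K) :
    (∏ i, d * ρ i)⁻¹ * (ρ₀ / 4) ^ k ≤ #S := by
  have hρ_pos : ∀ i, 0 < ρ i := fun i => hρ₀.trans_le (hρ i)
  set M : Fin d → ℕ := fun i => ⌊(d * ρ i)⁻¹⌋₊
  set M₀ := ⌊(d * ρ₀)⁻¹⌋₊
  have hM : ∀ i, M i ≤ M₀ := fun i => by
    have hd : (0 : ℝ) < d := Nat.cast_pos.2 i.pos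
    exact Nat.floor_le_floor (inv_anti₀ (by positivity) (by gcongr; exact hρ i))
  have hcount : ∏ i, (M i + 1) ≤ #S * (M₀ + 1) ^ k :=
    prod_le_card_mul_of_covers hw hS hM fun c hc => hcover _
      ⟨hL.sum_natCast_smul_mem (fun i => (hwΛK i).1) c,
        hK.sum_smul_mem_of_mem_smul hρ_pos (fun i => (hwΛK i).2) (fun i => Nat.cast_nonneg _)
          (sum_mul_le_one_of_le_floor_inv hρ_pos fun i => by
            simpa [M] using Nat.lt_succ_iff.1 (mem_range.1 (Fintype.mem_piFinset.1 hc i)))⟩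
  have hM₀ : ((M₀ : ℝ) + 1) * (ρ₀ / 4) ≤ 1 := by
    have hM₀ρ₀ : (M₀ : ℝ) * ρ₀ ≤ 1 := calc
      (M₀ : ℝ) * ρ₀ ≤ (d * ρ₀)⁻¹ * ρ₀ := by
        gcongr
        exact Nat.floor_le (by positivity)
      _ = (d : ℝ)⁻¹ := by rw [mul_inv, inv_mul_cancel_right₀ hρ₀.ne']
      _ ≤ 1 := Nat.cast_inv_le_one d
    linarith
  calc (∏ i, d * ρ i)⁻¹ * (ρ₀ / 4) ^ k ≤ (∏ i, (M i + 1) : ℕ) * (ρ₀ / 4) ^ k := by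
        gcongr
        rw [← prod_inv_distrib]
        push_cast
        exact prod_le_prod (fun i _ => by have := hρ_pos i; positivity)
          fun i _ => (Nat.lt_floor_add_one _).le
    _ ≤ (#S * (M₀ + 1) ^ k : ℕ) * (ρ₀ / 4) ^ k := by gcongr
    _ = #S * (((M₀ : ℝ) + 1) * (ρ₀ / 4)) ^ k := by push_cast; rw [mul_pow, mul_assoc]
    _ ≤ #S := mul_le_of_le_one_right (by positivity) (pow_le_one₀ (by positivity) hM₀)

theorem statement6_general (d k : ℕ) (hkd : k + 1 ≤ d) :
    ∃ c : ℝ, 0 < c ∧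
      ∀ (Λ K : Set (Euc d)), IsLattice Λ → IsSymmConvexBody K →
        succMin Λ K d ≤ 1 →
        ∀ S : Finset (AffineSubspace ℝ (Euc d)),
          (∀ A ∈ S, (A : Set (Euc d)).Nonempty ∧ Module.finrank ℝ A.direction = k) →
          (∀ x ∈ Λ ∩ K, ∃ A ∈ S, x ∈ A) →
          c * (∏ i ∈ Finset.Icc (k+1) d, succMin Λ K i)⁻¹ ≤ (S.card : ℝ) := by
  have hd : (0 : ℝ) < d := by exact_mod_cast (by omega : 0 < d)
  refine ⟨((2 * d : ℝ) ^ d)⁻¹ * (1 / 2) ^ k, by positivity, ?_⟩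
  intro Λ K hL hK hmin_le_one S hS hcover
  set P := ∏ i ∈ Icc (k + 1) d, succMin Λ K i
  rcases (prod_nonneg fun i _ => succMin_nonneg Λ K i : 0 ≤ P).eq_or_lt with hP | hP
  · rw [show P = 0 from hP.symm, inv_zero, mul_zero]
    positivity
  set ε := succMin Λ K (k + 1)
  set μ : ℕ → ℝ := fun i => succMin Λ K (max (i + 1) (k + 1))
  have hε : 0 < ε := (succMin_nonneg Λ K _).lt_of_ne fun h =>
    hP.ne' (prod_eq_zero (mem_Icc.2 ⟨le_rfl, hkd⟩) h.symm)
  have hεμ : ∀ i < d, ε ≤ μ i := fun i hi =>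
    succMin_mono hL hK (le_max_right _ _) (max_le hi hkd)
  obtain ⟨w, hw, hwΛK⟩ := exists_linearIndependent_mem_smul hL hK (ρ := fun i => 2 * μ i) d le_rfl
    fun i hi => (succMin_mono hL hK (le_max_left _ _) (max_le hi hkd)).trans_lt
      (by linarith [hεμ i hi])
  have hprod : ∏ i : Fin d, d * (2 * μ i) = (2 * d) ^ d * ε ^ k * P := by
    rw [prod_mul_distrib, prod_mul_distrib, prod_const, prod_const, card_univ, Fintype.card_fin,
      prod_fin_apply_max_succ (fun i => succMin Λ K i) (by omega : k ≤ d)]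
    ring
  calc ((2 * d : ℝ) ^ d)⁻¹ * (1 / 2) ^ k * P⁻¹
      = (∏ i : Fin d, d * (2 * μ i))⁻¹ * (2 * ε / 4) ^ k := by
        rw [hprod]
        field_simp
        ring
    _ ≤ #S := inv_prod_mul_pow_le_card_of_covers hL hK (fun A hA => (hS A hA).2.le) hcover hw
        (by positivity) (by linarith [(succMin_mono hL hK hkd le_rfl).trans hmin_le_one])
        (fun i => by linarith [hεμ i i.2]) hwΛK

theorem statement6 (d k : ℕ) (hk1 : 1 ≤ k) (hkd : k + 1 ≤ d) :
    ∃ c : ℝ, 0 < c ∧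
      ∀ (Λ K : Set (Euc d)), IsLattice Λ → IsSymmConvexBody K →
        succMin Λ K d ≤ 1 →
        ∀ S : Finset (AffineSubspace ℝ (Euc d)),
          (∀ A ∈ S, (A : Set (Euc d)).Nonempty ∧ Module.finrank ℝ A.direction = k) →
          (∀ x ∈ Λ ∩ K, ∃ A ∈ S, x ∈ A) →
          c * (∏ i ∈ Finset.Icc (k+1) d, succMin Λ K i)⁻¹ ≤ (S.card : ℝ) :=
  statement6_general d k hkd
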